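/- arXiv:1806.10479 — 2 statements merged into one kernel-verified Lean document; each statement's English description precedes it below -/
import Mathlib

section
/- Let u ∈ L²(0,∞) with ‖u‖₂ = 1, ξ ≥ 0, k > 0, λ > 0, and suppose k∫₀^∞ |u|²/r² dr ≤ λ and ∫₀^∞ (r-ξ)²|u|² dr ≤ λ. Then for every R₀ > ξ, λ ≥ (k/R₀²)·(1 + k/(R₀²(R₀-ξ)²))^{-1}. -/
open Set MeasureTheory

/-- Combining the centrifugal and potential-energy bounds for a normalized `u`:
for every `R₀ > ξ ≥ 0`, `λ ≥ (k/R₀²)·(1 + k/(R₀²(R₀-ξ)²))⁻¹`. -/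
theorem stmt_8 (u : ℝ → ℝ) (k ξ lam : ℝ) (hk : 0 < k) (hξ : 0 ≤ ξ) (hlam : 0 < lam)
    (hInt : IntegrableOn (fun r => u r ^ 2) (Ioi 0))
    (hIntc : IntegrableOn (fun r => u r ^ 2 / r ^ 2) (Ioi 0))
    (hIntp : IntegrableOn (fun r => (r - ξ) ^ 2 * u r ^ 2) (Ioi 0))
    (hnorm : ∫ r in Ioi (0 : ℝ), u r ^ 2 = 1)
    (h1 : k * ∫ r in Ioi (0 : ℝ), u r ^ 2 / r ^ 2 ≤ lam)
    (h2 : ∫ r in Ioi (0 : ℝ), (r - ξ) ^ 2 * u r ^ 2 ≤ lam) :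
    ∀ R₀ : ℝ, ξ < R₀ →
      k / R₀ ^ 2 * (1 + k / (R₀ ^ 2 * (R₀ - ξ) ^ 2))⁻¹ ≤ lam := by
  intro R₀ hR
  have hR0 : (0:ℝ) < R₀ := lt_of_le_of_lt hξ hR
  have hRξ : (0:ℝ) < R₀ - ξ := sub_pos.mpr hR
  set A := ∫ r in Ioc (0:ℝ) R₀, u r ^ 2 with hAdef
  set B := ∫ r in Ioi R₀, u r ^ 2 with hBdef
  have hsub1 : Ioc (0:ℝ) R₀ ⊆ Ioi 0 := Ioc_subset_Ioi_self
  have hsub2 : Ioi R₀ ⊆ Ioi (0:ℝ) := Ioi_subset_Ioi hR0.le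
  have hI1 : IntegrableOn (fun r => u r ^ 2) (Ioc (0:ℝ) R₀) := hInt.mono_set hsub1
  have hI2 : IntegrableOn (fun r => u r ^ 2) (Ioi R₀) := hInt.mono_set hsub2
  have hAB : A + B = 1 := by
    rw [hAdef, hBdef, ← MeasureTheory.setIntegral_union (Ioc_disjoint_Ioi le_rfl)
      measurableSet_Ioi hI1 hI2, Ioc_union_Ioi_eq_Ioi hR0.le, hnorm]
  -- Chebyshev bound: (R₀-ξ)² B ≤ lam
  have hB : (R₀ - ξ) ^ 2 * B ≤ lam := by
    have e1 : (R₀ - ξ) ^ 2 * B = ∫ r in Ioi R₀, (R₀ - ξ) ^ 2 * u r ^ 2 := by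
      rw [hBdef, ← integral_const_mul]
    have e2 : (∫ r in Ioi R₀, (R₀ - ξ) ^ 2 * u r ^ 2)
        ≤ ∫ r in Ioi R₀, (r - ξ) ^ 2 * u r ^ 2 := by
      refine setIntegral_mono_on (hI2.const_mul _) (hIntp.mono_set hsub2)
        measurableSet_Ioi ?_
      intro r hr
      have : (R₀ - ξ) ^ 2 ≤ (r - ξ) ^ 2 := by
        have : R₀ - ξ ≤ r - ξ := by simp only [mem_Ioi] at hr; linarith
        exact pow_le_pow_left₀ hRξ.le this 2
      nlinarith [sq_nonneg (u r)]
    have e3 : (∫ r in Ioi R₀, (r - ξ) ^ 2 * u r ^ 2)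
        ≤ ∫ r in Ioi (0:ℝ), (r - ξ) ^ 2 * u r ^ 2 := by
      refine setIntegral_mono_set hIntp ?_ (HasSubset.Subset.eventuallyLE hsub2)
      filter_upwards with r using by positivity
    linarith
  -- Centrifugal bound: (k/R₀²) A ≤ lam
  have hA : k / R₀ ^ 2 * A ≤ lam := by
    have e1 : k / R₀ ^ 2 * A = k * ∫ r in Ioc (0:ℝ) R₀, u r ^ 2 / R₀ ^ 2 := by
      rw [hAdef, integral_div]; ring
    have e2 : (∫ r in Ioc (0:ℝ) R₀, u r ^ 2 / R₀ ^ 2)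
        ≤ ∫ r in Ioc (0:ℝ) R₀, u r ^ 2 / r ^ 2 := by
      refine setIntegral_mono_on (hI1.div_const _) (hIntc.mono_set hsub1)
        measurableSet_Ioc ?_
      intro r hr
      obtain ⟨hr0, hrR⟩ := hr
      have hrsq : r ^ 2 ≤ R₀ ^ 2 := pow_le_pow_left₀ hr0.le hrR 2
      exact div_le_div_of_nonneg_left (sq_nonneg (u r)) (by positivity) hrsq
    have e3 : (∫ r in Ioc (0:ℝ) R₀, u r ^ 2 / r ^ 2)
        ≤ ∫ r in Ioi (0:ℝ), u r ^ 2 / r ^ 2 := by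
      refine setIntegral_mono_set hIntc ?_ (HasSubset.Subset.eventuallyLE hsub1)
      filter_upwards with r using by positivity
    calc k / R₀ ^ 2 * A = k * ∫ r in Ioc (0:ℝ) R₀, u r ^ 2 / R₀ ^ 2 := e1
      _ ≤ k * ∫ r in Ioi (0:ℝ), u r ^ 2 / r ^ 2 := by
          exact mul_le_mul_of_nonneg_left (le_trans e2 e3) hk.le
      _ ≤ lam := h1
  -- Final arithmetic
  have hD : (0:ℝ) < 1 + k / (R₀ ^ 2 * (R₀ - ξ) ^ 2) := by positivity
  rw [mul_inv_le_iff₀ hD]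
  have hBle : B ≤ lam / (R₀ - ξ) ^ 2 := by
    rw [le_div_iff₀ (by positivity)]; linarith [hB]
  have hAge : 1 - lam / (R₀ - ξ) ^ 2 ≤ A := by linarith
  have key : k / R₀ ^ 2 * (1 - lam / (R₀ - ξ) ^ 2) ≤ lam := by
    calc k / R₀ ^ 2 * (1 - lam / (R₀ - ξ) ^ 2) ≤ k / R₀ ^ 2 * A :=
          mul_le_mul_of_nonneg_left hAge (by positivity)
      _ ≤ lam := hA
  have : k / R₀ ^ 2 * (1 - lam / (R₀ - ξ) ^ 2)
      = k / R₀ ^ 2 - lam * (k / (R₀ ^ 2 * (R₀ - ξ) ^ 2)) := by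
    field_simp
  nlinarith [key, this]
end

section
/- Let Φ: (0,∞) → [0,∞) be differentiable with Φ(r) ≥ 0 for all r, and suppose Ψ(r) := e^{-2Φ(r)}/r³ attains its maximum at a point r̃ > 0. Then Φ'(r̃) = -3/(2r̃), and if moreover |Φ'(r)|² = δ²·(V(r) - E)₊ for all r with V(r) = k/r² + (r-ξ)², then (δ²k - 9/4)/r̃² = δ²(E - (r̃-ξ)²) ≤ δ²E, hence if δ = α/√k with α > 3/2 then r̃ ≥ √((α² - 9/4)/(α²E))·√k. -/
open Set

/-- If `Ψ(r) = e^{-2Φ(r)}/r³` attains its maximum on `(0,∞)` at `r̃`, then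
`Φ'(r̃) = -3/(2r̃)`; with the eikonal equation `|Φ'|² = δ²(V-E)₊` for
`V(r) = k/r² + (r-ξ)²` one gets `(δ²k - 9/4)/r̃² = δ²(E - (r̃-ξ)²) ≤ δ²E`, hence
for `δ = α/√k`, `α > 3/2`, the lower bound `r̃ ≥ √((α²-9/4)/(α²E))·√k`. -/
theorem stmt_15 (Φ : ℝ → ℝ) (k ξ E δ α rt : ℝ) (hk : 0 < k) (hE : 0 < E)
    (hδ : 0 < δ) (hα : 3 / 2 < α) (hδdef : δ = α / Real.sqrt k)
    (hΦdiff : ∀ r ∈ Ioi (0 : ℝ), DifferentiableAt ℝ Φ r)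
    (hΦpos : ∀ r ∈ Ioi (0 : ℝ), 0 ≤ Φ r)
    (hrt : 0 < rt)
    (hmax : IsMaxOn (fun r => Real.exp (-2 * Φ r) / r ^ 3) (Ioi 0) rt)
    (heik : ∀ r ∈ Ioi (0 : ℝ),
      (deriv Φ r) ^ 2 = δ ^ 2 * max (k / r ^ 2 + (r - ξ) ^ 2 - E) 0) :
    deriv Φ rt = -3 / (2 * rt) ∧
    (δ ^ 2 * k - 9 / 4) / rt ^ 2 = δ ^ 2 * (E - (rt - ξ) ^ 2) ∧
    (δ ^ 2 * k - 9 / 4) / rt ^ 2 ≤ δ ^ 2 * E ∧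
    Real.sqrt ((α ^ 2 - 9 / 4) / (α ^ 2 * E)) * Real.sqrt k ≤ rt := by
  have hrt3 : rt ^ 3 ≠ 0 := by positivity
  have hrtm : rt ∈ Ioi (0:ℝ) := hrt
  set Φ' := deriv Φ rt with hΦ'
  have hd : HasDerivAt Φ Φ' rt := (hΦdiff rt hrtm).hasDerivAt
  have hexp : HasDerivAt (fun r => Real.exp (-2 * Φ r))
      (Real.exp (-2 * Φ rt) * (-2 * Φ')) rt := by
    have h1 : HasDerivAt (fun r => -2 * Φ r) (-2 * Φ') rt := hd.const_mul (-2)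
    exact (Real.hasDerivAt_exp _).comp rt h1
  have hpow : HasDerivAt (fun r : ℝ => r ^ 3) (3 * rt ^ 2) rt := by
    simpa using hasDerivAt_pow 3 rt
  have hf : HasDerivAt (fun r => Real.exp (-2 * Φ r) / r ^ 3)
      ((Real.exp (-2 * Φ rt) * (-2 * Φ') * rt ^ 3 -
        Real.exp (-2 * Φ rt) * (3 * rt ^ 2)) / (rt ^ 3) ^ 2) rt :=
    hexp.div hpow hrt3
  have hloc : IsLocalMax (fun r => Real.exp (-2 * Φ r) / r ^ 3) rt :=
    hmax.isLocalMax (isOpen_Ioi.mem_nhds hrtm)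
  have hz := hloc.hasDerivAt_eq_zero hf
  have hExp : 0 < Real.exp (-2 * Φ rt) := Real.exp_pos _
  have hnum : Real.exp (-2 * Φ rt) * (-2 * Φ') * rt ^ 3 -
      Real.exp (-2 * Φ rt) * (3 * rt ^ 2) = 0 := by
    have h6 : ((rt ^ 3) ^ 2 : ℝ) ≠ 0 := by positivity
    exact (div_eq_zero_iff.1 hz).resolve_right h6
  have h1 : Φ' = -3 / (2 * rt) := by
    have h2 : Real.exp (-2 * Φ rt) * rt ^ 2 * (-2 * Φ' * rt - 3) = 0 := by
      linear_combination hnum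
    have h3 : -2 * Φ' * rt - 3 = 0 := by
      rcases mul_eq_zero.1 h2 with h | h
      · exfalso
        have : 0 < Real.exp (-2 * Φ rt) * rt ^ 2 := by positivity
        linarith
      · exact h
    field_simp
    linarith
  have heikt := heik rt hrtm
  rw [← hΦ', h1] at heikt
  have hL : (-3 / (2 * rt)) ^ 2 = 9 / (4 * rt ^ 2) := by
    field_simp; ring
  rw [hL] at heikt
  have hmaxA : max (k / rt ^ 2 + (rt - ξ) ^ 2 - E) 0
      = k / rt ^ 2 + (rt - ξ) ^ 2 - E := by
    by_contra hcon
    have : max (k / rt ^ 2 + (rt - ξ) ^ 2 - E) 0 = 0 := by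
      rcases le_total (k / rt ^ 2 + (rt - ξ) ^ 2 - E) 0 with h | h
      · simp [max_eq_right h]
      · exact absurd (max_eq_left h) hcon
    rw [this, mul_zero] at heikt
    have : (0:ℝ) < 9 / (4 * rt ^ 2) := by positivity
    linarith
  rw [hmaxA] at heikt
  have h2 : (δ ^ 2 * k - 9 / 4) / rt ^ 2 = δ ^ 2 * (E - (rt - ξ) ^ 2) := by
    linear_combination -heikt
  have h3 : (δ ^ 2 * k - 9 / 4) / rt ^ 2 ≤ δ ^ 2 * E := by
    rw [h2]
    nlinarith [sq_nonneg (rt - ξ), sq_nonneg δ]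
  refine ⟨h1, h2, h3, ?_⟩
  have hsk : Real.sqrt k ^ 2 = k := Real.sq_sqrt hk.le
  have hskpos : 0 < Real.sqrt k := Real.sqrt_pos.2 hk
  have hδ2 : δ ^ 2 = α ^ 2 / k := by
    rw [hδdef, div_pow, hsk]
  have hα2 : (0:ℝ) < α ^ 2 - 9 / 4 := by nlinarith
  -- rt^2 ≥ ((α²-9/4)/(α²E)) * k
  have hδ2k : δ ^ 2 * k = α ^ 2 := by
    rw [hδ2]; field_simp
  have h4 : α ^ 2 - 9 / 4 ≤ α ^ 2 / k * E * rt ^ 2 := by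
    rw [← hδ2, ← hδ2k, ← div_le_iff₀ (by positivity : (0:ℝ) < rt ^ 2)]
    exact h3
  have h5 : (α ^ 2 - 9 / 4) * k ≤ α ^ 2 * E * rt ^ 2 := by
    have h6 := mul_le_mul_of_nonneg_right h4 hk.le
    have h7 : α ^ 2 / k * E * rt ^ 2 * k = α ^ 2 * E * rt ^ 2 := by
      field_simp
    linarith [h6, h7.le, h7.ge]
  have hrt2ge : ((α ^ 2 - 9 / 4) / (α ^ 2 * E)) * k ≤ rt ^ 2 := by
    rw [div_mul_eq_mul_div, div_le_iff₀ (by positivity)]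
    nlinarith [h5]
  calc Real.sqrt ((α ^ 2 - 9 / 4) / (α ^ 2 * E)) * Real.sqrt k
      = Real.sqrt (((α ^ 2 - 9 / 4) / (α ^ 2 * E)) * k) := by
        rw [Real.sqrt_mul (by positivity)]
    _ ≤ Real.sqrt (rt ^ 2) := Real.sqrt_le_sqrt hrt2ge
    _ = rt := by rw [Real.sqrt_sq hrt.le]
end
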